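/- Let m be an integer with 2 ≤ m ≤ d−1 and define p(m) = max( 2(m+1)/m, max_{1 ≤ k ≤ m} min( 2(2d−k−1)/(2d−k−3), 2k/(k−1) ) ). Then min_{2 ≤ m ≤ d−1} p(m) = p_s(d), where p_s(d) = 2 + 12/(4d−6−k) for d ≡ k (mod 3), k ∈ {0,1,2}. -/

import Mathlib

/-!
Put `r = d % 3` and `k₀ = ⌊(2d - 1)/3⌋`, so that `2d = 3k₀ + 3 - r`. Then every quantity in sight has
the form `2 + 4/x`, which is antitone in `x > 0`: `p_s(d)` has `x = 2k₀ - r`, the two entries of the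
`k`-th term have `x = 3k₀ - r - k` and `x = 2k - 2`, and `2(m+1)/m` has `x = 2m`. Comparing these `x`
shows that every term is at most `p_s(d)` (through its first entry if `k ≤ k₀`, its second if `k > k₀`),
with equality at `k = k₀`, and that `2(m+1)/m ≥ p_s(d)` for `m < k₀` while `2(k₀+1)/k₀ ≤ p_s(d)`.
Hence `p(m) ≥ p_s(d)` for every `m ≥ 1`, with equality at `m = k₀`.
-/

noncomputable section

/-- `p_s(d) = 2 + 12/(4d-6-k)`, `d ≡ k (mod 3)`, `k ∈ {0,1,2}`. -/
def pS (d : ℕ) : ℝ :=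
  2 + 12 / (4 * (d : ℝ) - 6 - ((d % 3 : ℕ) : ℝ))

/-- `p(m) = max( 2(m+1)/m, max_{1 ≤ k ≤ m} min( 2(2d-k-1)/(2d-k-3), 2k/(k-1) ) )`,
where for `k = 1` the term `2k/(k-1)` is `+∞`, so the min is the first entry. -/
def pexp (d m : ℕ) : ℝ :=
  max (2 * ((m : ℝ) + 1) / (m : ℝ))
    (sSup {x : ℝ | ∃ k : ℕ, 1 ≤ k ∧ k ≤ m ∧
      x = if k = 1 then 2 * (2 * (d : ℝ) - (k : ℝ) - 1) / (2 * (d : ℝ) - (k : ℝ) - 3)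
          else min (2 * (2 * (d : ℝ) - (k : ℝ) - 1) / (2 * (d : ℝ) - (k : ℝ) - 3))
                   (2 * (k : ℝ) / ((k : ℝ) - 1))})

theorem two_mul_div_sub_one_eq {x : ℝ} (hx : x ≠ 1) : 2 * x / (x - 1) = 2 + 4 / (2 * x - 2) := by
  have : x - 1 ≠ 0 := sub_ne_zero.mpr hx
  field_simp
  ring

theorem two_mul_add_one_div_eq {x : ℝ} (hx : x ≠ 0) : 2 * (x + 1) / x = 2 + 4 / (2 * x) := by
  field_simp
  ring

def pexpTerm (d k : ℕ) : ℝ :=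
  if k = 1 then 2 * (2 * (d : ℝ) - (k : ℝ) - 1) / (2 * (d : ℝ) - (k : ℝ) - 3)
  else min (2 * (2 * (d : ℝ) - (k : ℝ) - 1) / (2 * (d : ℝ) - (k : ℝ) - 3))
           (2 * (k : ℝ) / ((k : ℝ) - 1))

theorem pexp_eq_max_sSup (d m : ℕ) :
    pexp d m = max (2 * ((m : ℝ) + 1) / m) (sSup (pexpTerm d '' Set.Icc 1 m)) := by
  unfold pexp
  congr 2
  ext x
  simp only [Set.mem_ofPred_eq, Set.mem_image, Set.mem_Icc, pexpTerm, and_assoc, eq_comm]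

theorem pexpTerm_le_left (d k : ℕ) :
    pexpTerm d k ≤ 2 * (2 * (d : ℝ) - k - 1) / (2 * (d : ℝ) - k - 3) := by
  unfold pexpTerm
  split_ifs
  exacts [le_rfl, min_le_left _ _]

theorem pexpTerm_le_right (d : ℕ) {k : ℕ} (hk : k ≠ 1) :
    pexpTerm d k ≤ 2 * (k : ℝ) / (k - 1) := by
  rw [pexpTerm, if_neg hk]
  exact min_le_right _ _

def pexpArgmin (d : ℕ) : ℕ := (2 * d - 1) / 3

theorem cast_mod_three_le_two (d : ℕ) : ((d % 3 : ℕ) : ℝ) ≤ 2 := by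
  have : d % 3 ≤ 2 := by omega
  exact_mod_cast this

theorem pexpArgmin_le (d : ℕ) : pexpArgmin d ≤ d - 1 := by
  unfold pexpArgmin; omega

section

variable {d : ℕ}

theorem two_le_pexpArgmin (hd : 4 ≤ d) : 2 ≤ pexpArgmin d := by
  unfold pexpArgmin; omega

theorem two_mul_cast_eq_pexpArgmin (hd : 1 ≤ d) :
    2 * (d : ℝ) = 3 * (pexpArgmin d : ℝ) + 3 - ((d % 3 : ℕ) : ℝ) := by
  have h : 3 * pexpArgmin d + 3 = 2 * d + d % 3 := by unfold pexpArgmin; omega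
  have h' : 3 * (pexpArgmin d : ℝ) + 3 = 2 * d + ((d % 3 : ℕ) : ℝ) := by exact_mod_cast h
  linarith

theorem pS_eq_two_add_four_div (hd : 1 ≤ d) :
    pS d = 2 + 4 / (2 * (pexpArgmin d : ℝ) - ((d % 3 : ℕ) : ℝ)) := by
  have h := two_mul_cast_eq_pexpArgmin hd
  rw [pS, show 4 * (d : ℝ) - 6 - ((d % 3 : ℕ) : ℝ)
      = 3 * (2 * (pexpArgmin d : ℝ) - ((d % 3 : ℕ) : ℝ)) by linarith,
    show (12 : ℝ) = 3 * 4 by norm_num, mul_div_mul_left _ _ three_ne_zero]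

theorem left_entry_eq_two_add_four_div (hd : 1 ≤ d) (k : ℕ)
    (hk : 3 * (pexpArgmin d : ℝ) - ((d % 3 : ℕ) : ℝ) - k ≠ 0) :
    2 * (2 * (d : ℝ) - k - 1) / (2 * (d : ℝ) - k - 3)
      = 2 + 4 / (3 * (pexpArgmin d : ℝ) - ((d % 3 : ℕ) : ℝ) - k) := by
  rw [show 2 * (d : ℝ) - k - 3 = 3 * (pexpArgmin d : ℝ) - ((d % 3 : ℕ) : ℝ) - k by
    linarith [two_mul_cast_eq_pexpArgmin hd]]
  field_simp
  linarith [two_mul_cast_eq_pexpArgmin hd]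

theorem pexpTerm_le_pS (hd : 4 ≤ d) (k : ℕ) : pexpTerm d k ≤ pS d := by
  have hr := cast_mod_three_le_two d
  have hk₀ : (2 : ℝ) ≤ pexpArgmin d := by exact_mod_cast two_le_pexpArgmin hd
  rw [pS_eq_two_add_four_div (by omega)]
  rcases le_or_gt k (pexpArgmin d) with hk | hk
  · have hk' : (k : ℝ) ≤ pexpArgmin d := by exact_mod_cast hk
    calc pexpTerm d k ≤ 2 * (2 * (d : ℝ) - k - 1) / (2 * (d : ℝ) - k - 3) := pexpTerm_le_left d k
      _ = 2 + 4 / (3 * (pexpArgmin d : ℝ) - ((d % 3 : ℕ) : ℝ) - k) :=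
        left_entry_eq_two_add_four_div (by omega) k (by linarith)
      _ ≤ 2 + 4 / (2 * (pexpArgmin d : ℝ) - ((d % 3 : ℕ) : ℝ)) := by
        gcongr 2 + 4 / ?_ <;> linarith
  · have hk' : (pexpArgmin d : ℝ) + 1 ≤ k := by exact_mod_cast hk
    have hk1 : (k : ℝ) ≠ 1 := by linarith
    calc pexpTerm d k ≤ 2 * (k : ℝ) / (k - 1) := pexpTerm_le_right d (by exact_mod_cast hk1)
      _ = 2 + 4 / (2 * (k : ℝ) - 2) := two_mul_div_sub_one_eq hk1
      _ ≤ 2 + 4 / (2 * (pexpArgmin d : ℝ) - ((d % 3 : ℕ) : ℝ)) := by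
        gcongr 2 + 4 / ?_ <;> linarith

theorem pexpTerm_pexpArgmin (hd : 4 ≤ d) : pexpTerm d (pexpArgmin d) = pS d := by
  have hr := cast_mod_three_le_two d
  have hk₀ : (2 : ℝ) ≤ pexpArgmin d := by exact_mod_cast two_le_pexpArgmin hd
  have hk₀1 : (pexpArgmin d : ℝ) ≠ 1 := by linarith
  have hleft : 2 * (2 * (d : ℝ) - pexpArgmin d - 1) / (2 * (d : ℝ) - pexpArgmin d - 3) = pS d := by
    rw [left_entry_eq_two_add_four_div (by omega) _ (by linarith), pS_eq_two_add_four_div (by omega)]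
    congr 2
    ring
  have hright : pS d ≤ 2 * (pexpArgmin d : ℝ) / (pexpArgmin d - 1) := by
    rw [two_mul_div_sub_one_eq hk₀1, pS_eq_two_add_four_div (by omega)]
    gcongr 2 + 4 / ?_ <;> linarith
  rw [pexpTerm, if_neg (by exact_mod_cast hk₀1), hleft, min_eq_left hright]

theorem sSup_pexpTerm_eq_pS {m : ℕ} (hd : 4 ≤ d) (hm : pexpArgmin d ≤ m) :
    sSup (pexpTerm d '' Set.Icc 1 m) = pS d := by
  refine IsGreatest.csSup_eq ⟨⟨pexpArgmin d, ⟨?_, hm⟩, pexpTerm_pexpArgmin hd⟩, ?_⟩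
  · linarith [two_le_pexpArgmin hd]
  · rintro _ ⟨k, -, rfl⟩
    exact pexpTerm_le_pS hd k

theorem pS_le_two_mul_add_one_div {m : ℕ} (hd : 4 ≤ d) (hm : 0 < m) (hmk : m < pexpArgmin d) :
    pS d ≤ 2 * ((m : ℝ) + 1) / m := by
  have hr := cast_mod_three_le_two d
  have hmk' : (m : ℝ) + 1 ≤ pexpArgmin d := by exact_mod_cast hmk
  rw [pS_eq_two_add_four_div (by omega), two_mul_add_one_div_eq (by positivity)]
  gcongr 2 + 4 / ?_
  linarith

theorem two_mul_add_one_div_pexpArgmin_le (hd : 4 ≤ d) :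
    2 * ((pexpArgmin d : ℝ) + 1) / pexpArgmin d ≤ pS d := by
  have hr := cast_mod_three_le_two d
  have hk₀ : (2 : ℝ) ≤ pexpArgmin d := by exact_mod_cast two_le_pexpArgmin hd
  rw [pS_eq_two_add_four_div (by omega), two_mul_add_one_div_eq (by positivity)]
  gcongr 2 + 4 / ?_ <;> linarith [(Nat.cast_nonneg (d % 3) : (0 : ℝ) ≤ _)]

theorem pexp_pexpArgmin (hd : 4 ≤ d) : pexp d (pexpArgmin d) = pS d := by
  rw [pexp_eq_max_sSup, sSup_pexpTerm_eq_pS hd le_rfl]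
  exact max_eq_right (two_mul_add_one_div_pexpArgmin_le hd)

theorem pS_le_pexp {m : ℕ} (hd : 4 ≤ d) (hm : 0 < m) : pS d ≤ pexp d m := by
  rw [pexp_eq_max_sSup]
  rcases lt_or_ge m (pexpArgmin d) with hmk | hmk
  · exact le_max_of_le_left (pS_le_two_mul_add_one_div hd hm hmk)
  · exact le_max_of_le_right (sSup_pexpTerm_eq_pS hd hmk).ge

end

/-- `min_{2 ≤ m ≤ d-1} p(m) = p_s(d)` for `d ≥ 9`. -/
theorem stmt10 (d : ℕ) (hd : 9 ≤ d) :
    IsLeast ((fun m : ℕ => pexp d m) '' {m : ℕ | 2 ≤ m ∧ m ≤ d - 1}) (pS d) := by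
  refine ⟨⟨pexpArgmin d, ⟨two_le_pexpArgmin (by omega), pexpArgmin_le d⟩,
    pexp_pexpArgmin (by omega)⟩, ?_⟩
  rintro _ ⟨m, ⟨hm, -⟩, rfl⟩
  exact pS_le_pexp (by omega) (by omega)
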